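/- If two impartial games with activeness G^g and H^h are equivalent, then they have the same activeness (g=h), the same type, and the same ordinary Grundy value 𝒢(G^g)=𝒢(H^h), and the same outcome o(G^g)=o(H^h). -/

import Mathlib

inductive AGame : Type where
  | mk : List AGame → Bool → AGame

namespace AGame

noncomputable instance : DecidableEq AGame := Classical.decEq _

def opts : AGame → List AGame | mk gs _ => gs
def act : AGame → Bool | mk _ g => g

theorem sizeOf_lt_of_mem {G G' : AGame} (h : G' ∈ G.opts) : sizeOf G' < sizeOf G := by
  cases G with
  | mk gs g =>
    simp only [opts] at h
    have := List.sizeOf_lt_of_mem h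
    simp [AGame.mk.sizeOf_spec]
    omega

/-- Disjunctive sum of games with activeness. -/
def add (G H : AGame) : AGame :=
  mk (G.opts.attach.map (fun x => add x.1 H) ++
      H.opts.attach.map (fun y => add G y.1)) (G.act || H.act)
termination_by sizeOf G + sizeOf H
decreasing_by
  · have := sizeOf_lt_of_mem x.2; omega
  · have := sizeOf_lt_of_mem y.2; omega

/-- `PPos G` means the outcome of `G` is 𝒫 (second player wins). -/
def PPos (G : AGame) : Prop :=
  G.act = false ∨ ∀ G' ∈ G.opts.attach, ¬ PPos G'.1
termination_by sizeOf G
decreasing_by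
  have := sizeOf_lt_of_mem G'.2; omega

/-- Hereditary set-equality (the paper's ≅). -/
def Identical (G H : AGame) : Prop :=
  G.act = H.act ∧ (∀ G' ∈ G.opts.attach, ∃ H' ∈ H.opts.attach, Identical G'.1 H'.1)
              ∧ (∀ H' ∈ H.opts.attach, ∃ G' ∈ G.opts.attach, Identical G'.1 H'.1)
termination_by sizeOf G + sizeOf H
decreasing_by
  · have := sizeOf_lt_of_mem G'.2; have := sizeOf_lt_of_mem H'.2; omega
  · have := sizeOf_lt_of_mem G'.2; have := sizeOf_lt_of_mem H'.2; omega

/-- Equivalence of games with activeness: same outcome in every sum. -/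
def Equiv (G H : AGame) : Prop := ∀ X : AGame, (PPos (add G X) ↔ PPos (add H X))

end AGame

namespace AGame

/-- Nimbers with activeness: `star γ n ≅ {star γ j : j < n}^{γ n}`. -/
def star (γ : ℕ → Bool) : ℕ → AGame
  | n => mk ((List.range n).attach.map (fun j => star γ j.1)) (γ n)
termination_by n => n
decreasing_by
  have := j.2; simp [List.mem_range] at this; omega

/-- The generalized Grundy set `𝒢^γ(G)`. -/
def GSet (γ : ℕ → Bool) (G : AGame) : Set ℕ := {n | PPos (add G (star γ n))}

/-- Minimum excludant of a set of naturals. -/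
noncomputable def mex (S : Set ℕ) : ℕ := sInf {n | n ∉ S}

/-- Ordinary Grundy value, computed ignoring activeness. -/
noncomputable def grundy (G : AGame) : ℕ :=
  mex {m | ∃ G' ∈ G.opts.attach, grundy G'.1 = m}
termination_by sizeOf G
decreasing_by
  have := sizeOf_lt_of_mem G'.2; omega

/-- The three types of games with activeness. -/
inductive AType : Type where
  | inactive : AType            -- type 0
  | activeSomeInactive : AType  -- type 1_{∃0}
  | activeAllActive : AType     -- type 1_{∀1}

open Classical in
/-- `type(G^g)`. -/
noncomputable def typ (G : AGame) : AType :=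
  if G.act = false then .inactive
  else if ∃ G' ∈ G.opts, G'.act = false then .activeSomeInactive
  else .activeAllActive

/-- Formal birthday `b(G)`. -/
def bday (G : AGame) : ℕ :=
  (G.opts.attach.map (fun G' => bday G'.1 + 1)).foldr max 0
termination_by sizeOf G
decreasing_by
  have := sizeOf_lt_of_mem G'.2; omega

/-- An option `G'` of `G` is reversible if it has an option equivalent to `G`. -/
def Reversible (G G' : AGame) : Prop := ∃ G'' ∈ G'.opts, Equiv G'' G

/-- A canonical game: all options canonical and no option reversible. -/
def Canonical (G : AGame) : Prop :=
  (∀ G' ∈ G.opts.attach, Canonical G'.1) ∧ (∀ G' ∈ G.opts, ¬ Reversible G G')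
termination_by sizeOf G
decreasing_by
  have := sizeOf_lt_of_mem G'.2; omega

/-- A transitive game: all options transitive and options of options are options. -/
def TransGame (G : AGame) : Prop :=
  (∀ G' ∈ G.opts.attach, TransGame G'.1) ∧ (∀ G' ∈ G.opts, ∀ G'' ∈ G'.opts, G'' ∈ G.opts)
termination_by sizeOf G
decreasing_by
  have := sizeOf_lt_of_mem G'.2; omega

/-- `G` is covered by `H` if every option of `G` is equivalent to some option of `H`. -/
def Covered (G H : AGame) : Prop := ∀ G' ∈ G.opts, ∃ H' ∈ H.opts, Equiv G' H'

/-- The relation `G ⋈ H`. -/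
def Bowtie (G H : AGame) : Prop :=
  (∀ G' ∈ G.opts, ¬ Equiv G' H) ∧ (∀ H' ∈ H.opts, ¬ Equiv G H')

/-- The linear chain `∅^{g₀ g₁ … gₙ}`. -/
def chain (g : ℕ → Bool) : ℕ → AGame
  | 0 => mk [] (g 0)
  | n + 1 => mk [chain g n] (g (n + 1))

end AGame

/-!
Each invariant is read off the outcome of `G + X` for one well-chosen `X`: the outcome itself
for `X = 0`; the activeness for `X = {0}^0`, since an active `G` moves from `G + {0}^0` to the
𝒫-position `G + 0`; the ordinary Grundy value for `X = *n` with all nimbers active, as `G + *n`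
is then 𝒫 iff `𝒢(G) = n`; and, for active `G`, the type for `X = *n` with all nimbers
inactive: an inactive option of `G` lets the first player move to an inactive sum, while if
all options `G'` are active, each has at most one `m` with `G' + *m` in 𝒫, and `G + *n` is 𝒫
for `n` the mex of these values.
-/

namespace AGame

lemma act_add (G H : AGame) : (add G H).act = (G.act || H.act) := by
  rw [add]; rfl

lemma mem_opts_add {G H K : AGame} :
    K ∈ (add G H).opts ↔ (∃ G' ∈ G.opts, K = add G' H) ∨ (∃ H' ∈ H.opts, K = add G H') := by
  rw [add]
  simp only [opts, List.mem_append, List.mem_map, List.mem_attach, true_and, Subtype.exists]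
  constructor <;> rintro (⟨a, ha, rfl⟩ | ⟨a, ha, rfl⟩)
  exacts [.inl ⟨a, ha, rfl⟩, .inr ⟨a, ha, rfl⟩, .inl ⟨a, ha, rfl⟩, .inr ⟨a, ha, rfl⟩]

lemma pPos_iff (G : AGame) : PPos G ↔ G.act = false ∨ ∀ G' ∈ G.opts, ¬ PPos G' := by
  rw [PPos]
  simp only [List.mem_attach, forall_const, Subtype.forall]

lemma pPos_of_act_eq_false {G : AGame} (h : G.act = false) : PPos G :=
  (pPos_iff G).2 (.inl h)

lemma pPos_add_iff {G H : AGame} (h : (G.act || H.act) = true) :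
    PPos (add G H) ↔ (∀ G' ∈ G.opts, ¬ PPos (add G' H)) ∧ (∀ H' ∈ H.opts, ¬ PPos (add G H')) := by
  rw [pPos_iff, act_add, h]
  simp only [Bool.true_eq_false, false_or, mem_opts_add]
  constructor
  · intro hp
    exact ⟨fun G' hG' => hp _ (.inl ⟨G', hG', rfl⟩), fun H' hH' => hp _ (.inr ⟨H', hH', rfl⟩)⟩
  · rintro ⟨hG, hH⟩ K (⟨G', hG', rfl⟩ | ⟨H', hH', rfl⟩)
    exacts [hG G' hG', hH H' hH']

lemma act_star (γ : ℕ → Bool) (n : ℕ) : (star γ n).act = γ n := by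
  rw [star]; rfl

lemma mem_opts_star {γ : ℕ → Bool} {n : ℕ} {K : AGame} :
    K ∈ (star γ n).opts ↔ ∃ j < n, K = star γ j := by
  rw [star]
  simp only [opts, List.mem_map, List.mem_attach, true_and, Subtype.exists, List.mem_range,
    exists_prop]
  exact exists_congr fun _ => and_congr_right' eq_comm

def zero : AGame := mk [] false

@[simp] lemma opts_zero : zero.opts = [] := rfl

@[simp] lemma act_zero : zero.act = false := rfl

lemma pPos_add_zero (G : AGame) : PPos (add G zero) ↔ PPos G := by
  have ih : ∀ G' ∈ G.opts, PPos (add G' zero) ↔ PPos G' := fun G' hG' =>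
    have := sizeOf_lt_of_mem hG'
    pPos_add_zero G'
  have hopts : ∀ K, K ∈ (add G zero).opts ↔ ∃ G' ∈ G.opts, K = add G' zero := fun K => by
    simp [mem_opts_add]
  rw [pPos_iff, pPos_iff G, act_add]
  simp only [act_zero, Bool.or_false, hopts]
  refine or_congr_right ⟨fun hp G' hG' hG'p => hp _ ⟨G', hG', rfl⟩ ((ih G' hG').2 hG'p), ?_⟩
  rintro hp K ⟨G', hG', rfl⟩
  exact mt (ih G' hG').1 (hp G' hG')
termination_by sizeOf G

lemma equiv_symm {G H : AGame} (h : Equiv G H) : Equiv H G := fun X => (h X).symm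

lemma pPos_iff_of_equiv {G H : AGame} (h : Equiv G H) : PPos G ↔ PPos H :=
  (pPos_add_zero G).symm.trans ((h zero).trans (pPos_add_zero H))

lemma act_eq_false_of_equiv {G H : AGame} (h : Equiv G H) (hH : H.act = false) :
    G.act = false := by
  by_contra hG
  rw [Bool.not_eq_false] at hG
  have hH0 : ∀ X : AGame, X.act = false → PPos (add G X) := fun X hX =>
    (h X).2 (pPos_of_act_eq_false (by rw [act_add, hH, hX]; rfl))
  have hmove := (pPos_add_iff (H := mk [zero] false) (by rw [hG]; rfl)).1 (hH0 _ rfl)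
  exact hmove.2 zero (List.mem_singleton_self _) (hH0 zero rfl)

lemma act_eq_of_equiv {G H : AGame} (h : Equiv G H) : G.act = H.act := by
  cases hG : G.act <;> cases hH : H.act
  · rfl
  · simpa [hH] using act_eq_false_of_equiv (equiv_symm h) hG
  · simpa [hG] using act_eq_false_of_equiv h hH
  · rfl

lemma mex_notMem {S : Set ℕ} (hS : S.Finite) : mex S ∉ S :=
  Nat.sInf_mem hS.infinite_compl.nonempty

lemma mex_le_of_notMem {S : Set ℕ} {n : ℕ} (hn : n ∉ S) : mex S ≤ n :=
  Nat.sInf_le hn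

lemma mem_of_lt_mex {S : Set ℕ} {n : ℕ} (hn : n < mex S) : n ∈ S :=
  not_not.1 (Nat.notMem_of_lt_sInf hn)

lemma finite_setOf_exists_mem_opts {G : AGame} {p : AGame → ℕ → Prop}
    (hp : ∀ G' ∈ G.opts, {m | p G' m}.Subsingleton) : {m | ∃ G' ∈ G.opts, p G' m}.Finite := by
  refine (G.opts.finite_toSet.biUnion fun G' hG' => (hp G' hG').finite).subset ?_
  rintro m ⟨G', hG', hm⟩
  exact Set.mem_biUnion hG' hm

lemma grundy_eq_mex (G : AGame) : grundy G = mex {m | ∃ G' ∈ G.opts, grundy G' = m} := by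
  rw [grundy]
  simp only [List.mem_attach, true_and, Subtype.exists, exists_prop]

lemma grundy_ne_of_mem_opts {G G' : AGame} (hG' : G' ∈ G.opts) : grundy G' ≠ grundy G := by
  rw [grundy_eq_mex G]
  exact fun hg => mex_notMem (finite_setOf_exists_mem_opts fun _ _ _ h₁ _ h₂ => h₁.symm.trans h₂)
    ⟨G', hG', hg⟩

lemma pPos_add_activeStar_iff (G : AGame) (n : ℕ) :
    PPos (add G (star (fun _ => true) n)) ↔ grundy G = n := by
  have ih : ∀ G' ∈ G.opts, PPos (add G' (star (fun _ => true) n)) ↔ grundy G' = n :=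
    fun G' hG' =>
      have := sizeOf_lt_of_mem hG'
      pPos_add_activeStar_iff G' n
  have ihn : ∀ j < n, PPos (add G (star (fun _ => true) j)) ↔ grundy G = j := fun j hj =>
    pPos_add_activeStar_iff G j
  rw [pPos_add_iff (by rw [act_star]; simp)]
  simp +contextual only [mem_opts_star, forall_exists_index, and_imp, ih]
  constructor
  · rintro ⟨hG, hn⟩
    refine le_antisymm ?_ (not_lt.1 fun hlt => hn _ _ hlt rfl ((ihn _ hlt).2 rfl))
    rw [grundy_eq_mex]
    exact mex_le_of_notMem fun ⟨G', hG', hgn⟩ => hG G' hG' hgn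
  · rintro rfl
    refine ⟨fun G' hG' => grundy_ne_of_mem_opts hG', ?_⟩
    rintro _ j hj rfl hp
    exact hj.ne ((ihn j hj).1 hp).symm
termination_by sizeOf G + n

lemma grundy_eq_of_equiv {G H : AGame} (h : Equiv G H) : grundy G = grundy H :=
  ((pPos_add_activeStar_iff H _).1 ((h _).1 ((pPos_add_activeStar_iff G _).2 rfl))).symm

lemma pPos_add_inactiveStar_subsingleton {G : AGame} (hG : G.act = true) :
    {m | PPos (add G (star (fun _ => false) m))}.Subsingleton := by
  have hmove : ∀ {m m'}, m < m' → PPos (add G (star (fun _ => false) m')) →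
      ¬ PPos (add G (star (fun _ => false) m)) := fun hlt hp =>
    ((pPos_add_iff (by simp [hG])).1 hp).2 _ (mem_opts_star.2 ⟨_, hlt, rfl⟩)
  intro m hm m' hm'
  rcases lt_trichotomy m m' with hlt | heq | hgt
  exacts [absurd hm (hmove hlt hm'), heq, absurd hm' (hmove hgt hm)]

lemma exists_pPos_add_inactiveStar {G : AGame} (hG : G.act = true)
    (hopts : ∀ G' ∈ G.opts, G'.act = true) : ∃ n, PPos (add G (star (fun _ => false) n)) := by
  set S := {m | ∃ G' ∈ G.opts, PPos (add G' (star (fun _ => false) m))}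
  have hS : S.Finite := finite_setOf_exists_mem_opts fun G' hG' =>
    pPos_add_inactiveStar_subsingleton (hopts G' hG')
  refine ⟨mex S, (pPos_add_iff (by simp [hG])).2 ⟨fun G' hG' hp => mex_notMem hS ⟨G', hG', hp⟩, ?_⟩⟩
  intro X hX hp
  obtain ⟨j, hj, rfl⟩ := mem_opts_star.1 hX
  obtain ⟨G', hG', hG'p⟩ := mem_of_lt_mex hj
  exact ((pPos_add_iff (by simp [hG])).1 hp).1 G' hG' hG'p

lemma exists_inactive_opt_iff {G : AGame} (hG : G.act = true) :
    (∃ G' ∈ G.opts, G'.act = false) ↔ ∀ n, ¬ PPos (add G (star (fun _ => false) n)) := by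
  constructor
  · rintro ⟨G', hG', hG'act⟩ n hp
    exact ((pPos_add_iff (by simp [hG])).1 hp).1 G' hG'
      (pPos_of_act_eq_false (by rw [act_add, hG'act, act_star]; rfl))
  · intro hnone
    by_contra! hopts
    obtain ⟨n, hn⟩ := exists_pPos_add_inactiveStar hG fun G' hG' => by simpa using hopts G' hG'
    exact hnone n hn

lemma typ_eq_of_equiv {G H : AGame} (h : Equiv G H) : typ G = typ H := by
  have hact := act_eq_of_equiv h
  cases hG : G.act with
  | false => simp only [typ, hG, ← hact, if_true]
  | true =>
    have hinactive : (∃ G' ∈ G.opts, G'.act = false) ↔ (∃ H' ∈ H.opts, H'.act = false) := by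
      rw [exists_inactive_opt_iff hG, exists_inactive_opt_iff (hact ▸ hG)]
      exact forall_congr' fun n => not_congr (h _)
    simp only [typ, hG, ← hact, hinactive]

end AGame

/-- Equivalent games have the same activeness, type, ordinary Grundy value, and outcome. -/
theorem AGame.invariants_of_equiv (G H : AGame) (h : AGame.Equiv G H) :
    G.act = H.act ∧ AGame.typ G = AGame.typ H ∧ AGame.grundy G = AGame.grundy H ∧
    (AGame.PPos G ↔ AGame.PPos H) :=
  ⟨act_eq_of_equiv h, typ_eq_of_equiv h, grundy_eq_of_equiv h, pPos_iff_of_equiv h⟩
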